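/- LP^{→,F} is paraconsistent: for every formula A in which the falsity constant F does not occur and every formula B in which no propositional variable occurs that occurs in A, if {A, ¬A} ⊨ B then ⊨ B. In particular, for distinct propositional variables p and q, {p, ¬p} ⊭ q. -/
import Mathlib


/-- The three truth values: true, false, both-true-and-false. -/
inductive TV : Type
  | t : TV
  | f : TV
  | b : TV
  deriving DecidableEq

/-- Formulas of LP^{→,F}: propositional variables, falsity constant,
    negation, conjunction, disjunction, implication. -/
inductive Fm : Type
  | var : ℕ → Fm
  | fls : Fm
  | neg : Fm → Fm
  | conj : Fm → Fm → Fm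
  | disj : Fm → Fm → Fm
  | impl : Fm → Fm → Fm
  deriving DecidableEq

/-- The LP^{→,F} negation truth function. -/
def TV.negLP : TV → TV
  | .t => .f
  | .f => .t
  | .b => .b

/-- The LP^{→,F} conjunction truth function. -/
def TV.andLP : TV → TV → TV
  | .f, _ => .f
  | _, .f => .f
  | .t, .t => .t
  | _, _ => .b

/-- The LP^{→,F} disjunction truth function. -/
def TV.orLP : TV → TV → TV
  | .t, _ => .t
  | _, .t => .t
  | .f, .f => .f
  | _, _ => .b

/-- The LP^{→,F} implication truth function: t if the antecedent is f,
    otherwise the value of the consequent. -/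
def TV.implLP : TV → TV → TV
  | .f, _ => .t
  | _, y => y

/-- A valuation for LP^{→,F}. -/
def IsValuation (ν : Fm → TV) : Prop :=
  ν .fls = .f ∧
  (∀ A, ν (.neg A) = (ν A).negLP) ∧
  (∀ A B, ν (.conj A B) = (ν A).andLP (ν B)) ∧
  (∀ A B, ν (.disj A B) = (ν A).orLP (ν B)) ∧
  (∀ A B, ν (.impl A B) = (ν A).implLP (ν B))

/-- Logical equivalence in LP^{→,F}. -/
def LEquiv (A B : Fm) : Prop := ∀ ν : Fm → TV, IsValuation ν → ν A = ν B

/-- The truth constant T, an abbreviation for ¬F. -/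
def Fm.tru : Fm := .neg .fls

/-- A truth value is designated iff it is t or ⊤. -/
def Designated (v : TV) : Prop := v = .t ∨ v = .b

/-- Semantic logical consequence in LP^{→,F}. -/
def LPCons (Γ : Set Fm) (A : Fm) : Prop :=
  ∀ ν : Fm → TV, IsValuation ν → ((∃ B ∈ Γ, ν B = .f) ∨ Designated (ν A))

/-- Validity in LP^{→,F}. -/
def LPValid (A : Fm) : Prop := ∀ ν : Fm → TV, IsValuation ν → Designated (ν A)

/-- The propositional variables occurring in a formula. -/
def Fm.vars : Fm → Finset ℕ
  | .var n => {n}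
  | .fls => ∅
  | .neg A => A.vars
  | .conj A B => A.vars ∪ B.vars
  | .disj A B => A.vars ∪ B.vars
  | .impl A B => A.vars ∪ B.vars

/-- The falsity constant F does not occur in the formula. -/
def Fm.flsFree : Fm → Prop
  | .var _ => True
  | .fls => False
  | .neg A => A.flsFree
  | .conj A B => A.flsFree ∧ B.flsFree
  | .disj A B => A.flsFree ∧ B.flsFree
  | .impl A B => A.flsFree ∧ B.flsFree

/-- Evaluation of a formula under an assignment of truth values to variables. -/
def evalFm (σ : ℕ → TV) : Fm → TV
  | .var n => σ n
  | .fls => .f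
  | .neg A => (evalFm σ A).negLP
  | .conj A B => (evalFm σ A).andLP (evalFm σ B)
  | .disj A B => (evalFm σ A).orLP (evalFm σ B)
  | .impl A B => (evalFm σ A).implLP (evalFm σ B)

lemma evalFm_isValuation (σ : ℕ → TV) : IsValuation (evalFm σ) :=
  ⟨rfl, fun _ => rfl, fun _ _ => rfl, fun _ _ => rfl, fun _ _ => rfl⟩

lemma eval_congr (σ σ' : ℕ → TV) (A : Fm) (h : ∀ n ∈ A.vars, σ n = σ' n) :
    evalFm σ A = evalFm σ' A := by
  induction A with
  | var n => exact h n (by simp [Fm.vars])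
  | fls => rfl
  | neg A ih => simp [evalFm, ih h]
  | conj A B ihA ihB =>
      simp only [evalFm]
      rw [ihA (fun n hn => h n (by simp [Fm.vars, hn])),
          ihB (fun n hn => h n (by simp [Fm.vars, hn]))]
  | disj A B ihA ihB =>
      simp only [evalFm]
      rw [ihA (fun n hn => h n (by simp [Fm.vars, hn])),
          ihB (fun n hn => h n (by simp [Fm.vars, hn]))]
  | impl A B ihA ihB =>
      simp only [evalFm]
      rw [ihA (fun n hn => h n (by simp [Fm.vars, hn])),
          ihB (fun n hn => h n (by simp [Fm.vars, hn]))]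

lemma valuation_eq_eval (ν : Fm → TV) (hν : IsValuation ν) (A : Fm) :
    ν A = evalFm (fun n => ν (.var n)) A := by
  obtain ⟨hf, hn, hc, hd, hi⟩ := hν
  induction A with
  | var n => rfl
  | fls => simpa [evalFm] using hf
  | neg A ih => rw [hn, evalFm, ih]
  | conj A B ihA ihB => rw [hc, evalFm, ihA, ihB]
  | disj A B ihA ihB => rw [hd, evalFm, ihA, ihB]
  | impl A B ihA ihB => rw [hi, evalFm, ihA, ihB]

lemma eval_all_b (σ : ℕ → TV) (A : Fm) (hA : A.flsFree)
    (h : ∀ n ∈ A.vars, σ n = .b) : evalFm σ A = .b := by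
  induction A with
  | var n => exact h n (by simp [Fm.vars])
  | fls => exact absurd hA (by simp [Fm.flsFree])
  | neg A ih => rw [evalFm, ih hA h]; rfl
  | conj A B ihA ihB =>
      rw [evalFm, ihA hA.1 (fun n hn => h n (by simp [Fm.vars, hn])),
          ihB hA.2 (fun n hn => h n (by simp [Fm.vars, hn]))]; rfl
  | disj A B ihA ihB =>
      rw [evalFm, ihA hA.1 (fun n hn => h n (by simp [Fm.vars, hn])),
          ihB hA.2 (fun n hn => h n (by simp [Fm.vars, hn]))]; rfl
  | impl A B ihA ihB =>
      rw [evalFm, ihA hA.1 (fun n hn => h n (by simp [Fm.vars, hn])),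
          ihB hA.2 (fun n hn => h n (by simp [Fm.vars, hn]))]; rfl

/-- LP^{→,F} is paraconsistent: an F-free formula together with its negation
    entails a variable-disjoint formula only if that formula is valid; in
    particular a contradiction in one variable does not entail another variable. -/
theorem lp_paraconsistent :
    (∀ A B : Fm, A.flsFree → Disjoint A.vars B.vars →
      LPCons {A, A.neg} B → LPCons ∅ B) ∧
    (∀ p q : ℕ, p ≠ q → ¬ LPCons {.var p, .neg (.var p)} (.var q)) := by
  constructor
  · intro A B hA hdisj hcons ν hν
    right
    set σ : ℕ → TV := fun n => if n ∈ A.vars then .b else ν (.var n) with hσ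
    have hvalA : evalFm σ A = .b :=
      eval_all_b σ A hA (fun n hn => by simp [hσ, hn])
    have hB : evalFm σ B = ν B := by
      rw [valuation_eq_eval ν hν B]
      apply eval_congr
      intro n hn
      have : n ∉ A.vars := fun hmem => (Finset.disjoint_left.mp hdisj hmem) hn
      simp [hσ, this]
    have := hcons (evalFm σ) (evalFm_isValuation σ)
    rcases this with ⟨C, hC, hCf⟩ | hdes
    · rcases hC with rfl | rfl
      · rw [hvalA] at hCf; exact absurd hCf (by simp)
      · rw [show evalFm σ A.neg = (evalFm σ A).negLP from rfl, hvalA] at hCf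
        exact absurd hCf (by simp [TV.negLP])
    · rwa [hB] at hdes
  · intro p q hpq hcons
    set σ : ℕ → TV := fun n => if n = p then .b else .f with hσ
    rcases hcons (evalFm σ) (evalFm_isValuation σ) with ⟨C, hC, hCf⟩ | hdes
    · rcases hC with rfl | rfl
      · simp [evalFm, hσ] at hCf
      · simp [evalFm, hσ, TV.negLP] at hCf
    · rcases hdes with h | h <;> simp [evalFm, hσ, hpq.symm] at h
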